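/- arXiv:2406.14438 — 4 statements merged into one kernel-verified Lean document; each statement's English description precedes it below -/
import Mathlib

section
/- Let ℓ be a prime number, let V be a finite-dimensional ℚ_ℓ-vector space, and let F : V → V be a linear endomorphism. Then (V, F) is 1-semi-simple if and only if the following lifting property holds: for every finite-dimensional ℚ_ℓ-vector space W equipped with a linear endomorphism G : W → W, every linear map φ : V → W satisfying φ ∘ F = G ∘ φ, and every ω ∈ W with G(ω) = ω that lies in the image of φ, there exists v ∈ V with F(v) = v and φ(v) = ω. -/
/-!
Write `T = id - F`. By rank–nullity `ker T` and `V ⧸ im T` have the same dimension, so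
1-semi-simplicity means `V = ker T + im T` together with `ker T ⊓ im T = 0`, i.e. `T` maps
`im T` onto itself. Given `ω = φ u` fixed by `G`, split `u = k + m` with `k` fixed and
`m ∈ im T`. Then `φ m` is killed by `S = id - G` and lies in `φ (im T)`, a finite-dimensional
space that `S` maps onto itself, hence injectively; so `φ m = 0` and `k` lifts `ω`.
Conversely, the lifting property for the projection `V → V ⧸ im T` (with `G = id`) is exactly
the surjectivity of `ker T → V ⧸ im T`.
-/

universe u v

/-- The natural map `V^F → V_F` from the invariants `ker(id − F)` to the coinvariants
`V ⧸ im(id − F)`, given by composing the inclusion with the quotient projection. -/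
noncomputable def invariantsToCoinvariants {R : Type*} [CommRing R] {V : Type*}
    [AddCommGroup V] [Module R V] (F : V →ₗ[R] V) :
    LinearMap.ker (LinearMap.id - F) →ₗ[R] V ⧸ LinearMap.range (LinearMap.id - F) :=
  (LinearMap.range (LinearMap.id - F)).mkQ ∘ₗ (LinearMap.ker (LinearMap.id - F)).subtype

open LinearMap Submodule

theorem Submodule.map_eq_self_iff_disjoint_ker {K W : Type*} [Field K] [AddCommGroup W]
    [Module K W] {f : W →ₗ[K] W} {N : Submodule K W} [FiniteDimensional K N]
    (hN : N.map f ≤ N) : N.map f = N ↔ Disjoint (ker f) N := by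
  have hmaps : ∀ x ∈ N, f x ∈ N := fun x hx => hN (mem_map_of_mem hx)
  have hinj : Function.Injective (f.restrict hmaps) ↔ Disjoint (ker f) N := by
    rw [← ker_eq_bot, ker_restrict, ← disjoint_iff_comap_eq_bot, disjoint_comm]
  have hsurj : Function.Surjective (f.restrict hmaps) ↔ N.map f = N := by
    rw [← range_eq_top, range_restrict, comap_subtype_eq_top, le_antisymm_iff, and_iff_right hN]
  rw [← hinj, ← hsurj, injective_iff_surjective]

section
variable {R V : Type*} [CommRing R] [AddCommGroup V] [Module R V] (F : V →ₗ[R] V)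

theorem invariantsToCoinvariants_apply (x : ker (LinearMap.id - F)) :
    invariantsToCoinvariants F x = Submodule.Quotient.mk (x : V) := rfl

theorem mem_ker_id_sub_iff {v : V} : v ∈ ker (LinearMap.id - F) ↔ F v = v := by
  rw [mem_ker, LinearMap.sub_apply, LinearMap.id_apply, sub_eq_zero, eq_comm]

theorem mkQ_range_id_sub_comp :
    (range (LinearMap.id - F)).mkQ ∘ₗ F = (range (LinearMap.id - F)).mkQ := by
  ext v
  exact (Submodule.Quotient.eq _).2 ⟨-v, by simp [neg_add_eq_sub]⟩

theorem injective_invariantsToCoinvariants_iff :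
    Function.Injective (invariantsToCoinvariants F) ↔
      Disjoint (ker (LinearMap.id - F)) (range (LinearMap.id - F)) := by
  rw [← ker_eq_bot, invariantsToCoinvariants, ker_comp, ker_mkQ, disjoint_iff_comap_eq_bot]

end

section
variable {K V : Type*} [Field K] [AddCommGroup V] [Module K V] [FiniteDimensional K V]
  (F : V →ₗ[K] V)

theorem bijective_invariantsToCoinvariants_iff_surjective :
    Function.Bijective (invariantsToCoinvariants F) ↔
      Function.Surjective (invariantsToCoinvariants F) := by
  have hdim : Module.finrank K (ker (LinearMap.id - F)) =
      Module.finrank K (V ⧸ range (LinearMap.id - F)) := by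
    have := finrank_range_add_finrank_ker (LinearMap.id - F)
    have := (range (LinearMap.id - F)).finrank_quotient_add_finrank
    omega
  exact and_iff_right_of_imp (injective_iff_surjective_of_finrank_eq_finrank hdim).2

theorem exists_fixed_lift_of_bijective_invariantsToCoinvariants {W : Type*} [AddCommGroup W]
    [Module K W] (hF : Function.Bijective (invariantsToCoinvariants F)) {G : W →ₗ[K] W}
    {φ : V →ₗ[K] W} (hφ : φ ∘ₗ F = G ∘ₗ φ) {u : V} (hu : G (φ u) = φ u) :
    ∃ v, F v = v ∧ φ v = φ u := by
  set T := LinearMap.id - F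
  set S := LinearMap.id - G
  obtain ⟨⟨k, hk⟩, hku⟩ := hF.2 (Submodule.Quotient.mk u)
  rw [invariantsToCoinvariants_apply, Submodule.Quotient.eq] at hku
  rw [mem_ker_id_sub_iff] at hk
  have hTT : (range T).map T = range T :=
    ((range T).map_eq_self_iff_disjoint_ker map_le_range).2
      ((injective_invariantsToCoinvariants_iff F).1 hF.1)
  have hφT : φ ∘ₗ T = S ∘ₗ φ := by
    rw [comp_sub, sub_comp, hφ, comp_id, id_comp]
  have hSφ : ((range T).map φ).map S = (range T).map φ := by
    rw [← map_comp, ← hφT, map_comp, hTT]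
  have hdisj : Disjoint (ker S) ((range T).map φ) :=
    (map_eq_self_iff_disjoint_ker hSφ.le).1 hSφ
  have hGk : G (φ k) = φ k := by rw [← LinearMap.comp_apply, ← hφ, comp_apply, hk]
  have hSk : S (φ (k - u)) = 0 := by
    simp only [S, LinearMap.sub_apply, LinearMap.id_apply, map_sub, hu, hGk, sub_self]
  have : φ (k - u) = 0 := hdisj.le_bot ⟨hSk, mem_map_of_mem hku⟩
  exact ⟨k, hk, by rwa [map_sub, sub_eq_zero] at this⟩

end

/-- `(V, F)` is 1-semi-simple (the natural map `ker(id − F) → V ⧸ im(id − F)`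
is an isomorphism) iff for every finite-dimensional `ℚ_[ℓ]`-vector space `W` with an
endomorphism `G`, every equivariant linear map `φ : V → W`, and every `G`-fixed vector `ω`
in the image of `φ`, there is an `F`-fixed `v ∈ V` with `φ v = ω`. -/
theorem oneSemisimple_iff_lifting_property
    (ℓ : ℕ) [Fact ℓ.Prime] (V : Type u) [AddCommGroup V] [Module ℚ_[ℓ] V]
    [FiniteDimensional ℚ_[ℓ] V] (F : V →ₗ[ℚ_[ℓ]] V) :
    Function.Bijective (invariantsToCoinvariants F) ↔
      ∀ (W : Type v) (_ : AddCommGroup W) (_ : Module ℚ_[ℓ] W)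
        (_ : FiniteDimensional ℚ_[ℓ] W) (G : W →ₗ[ℚ_[ℓ]] W) (φ : V →ₗ[ℚ_[ℓ]] W),
        φ ∘ₗ F = G ∘ₗ φ →
          ∀ ω : W, G ω = ω → (∃ v : V, φ v = ω) → ∃ v : V, F v = v ∧ φ v = ω := by
  constructor
  · rintro hF W _ _ _ G φ hφ _ hω ⟨u, rfl⟩
    exact exists_fixed_lift_of_bijective_invariantsToCoinvariants F hF hφ hω
  · intro h
    refine (bijective_invariantsToCoinvariants_iff_surjective F).2 fun q => ?_
    obtain ⟨u, rfl⟩ := Submodule.mkQ_surjective _ q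
    let Q := V ⧸ range (LinearMap.id - F)
    -- `Q` lives in universe `u`, the test spaces `W` in universe `v`.
    let e : Q ≃ₗ[ℚ_[ℓ]] ULift.{v} (Fin (Module.finrank ℚ_[ℓ] Q) → ℚ_[ℓ]) :=
      (Module.finBasis ℚ_[ℓ] Q).equivFun.trans ULift.moduleEquiv.symm
    obtain ⟨v, hv, hφv⟩ := h _ _ _ (Module.Finite.equiv e) LinearMap.id
      (e.toLinearMap ∘ₗ (range (LinearMap.id - F)).mkQ)
      (by rw [comp_assoc, mkQ_range_id_sub_comp, id_comp]) _ rfl ⟨u, rfl⟩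
    exact ⟨⟨v, (mem_ker_id_sub_iff F).2 hv⟩, e.injective hφv⟩
end

section
/- Let ℓ be a prime number, let V be a finite-dimensional ℚ_ℓ-vector space, and let F : V → V be a linear endomorphism such that (V, F) is 1-semi-simple. Let W ⊆ V be a linear subspace with F(W) ⊆ W, and let F̄ : V/W → V/W denote the endomorphism induced by F on the quotient. Then (V/W, F̄) is 1-semi-simple, i.e. the natural map ker(id − F̄) → (V/W)/im(id − F̄) is an isomorphism. -/
section

variable {R V V' : Type*} [CommRing R] [AddCommGroup V] [Module R V]
  [AddCommGroup V'] [Module R V']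

open LinearMap

theorem invariantsToCoinvariants_surjective_iff (f : V →ₗ[R] V) :
    Function.Surjective (invariantsToCoinvariants f) ↔
      ker (LinearMap.id - f) ⊔ range (LinearMap.id - f) = ⊤ := by
  rw [← range_eq_top, invariantsToCoinvariants, range_comp, Submodule.range_subtype,
    Submodule.map_mkQ_eq_top, sup_comm]

theorem invariantsToCoinvariants_surjective_of_semiconj {f : V →ₗ[R] V} {f' : V' →ₗ[R] V'}
    {g : V →ₗ[R] V'} (hg : Function.Surjective g) (hfg : g ∘ₗ f = f' ∘ₗ g)
    (hf : Function.Surjective (invariantsToCoinvariants f)) :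
    Function.Surjective (invariantsToCoinvariants f') := by
  rw [invariantsToCoinvariants_surjective_iff] at hf ⊢
  have hsemiconj : g ∘ₗ (LinearMap.id - f) = (LinearMap.id - f') ∘ₗ g := by
    rw [comp_sub, sub_comp, hfg, comp_id, id_comp]
  have hker : (ker (LinearMap.id - f)).map g ≤ ker (LinearMap.id - f') := by
    rw [Submodule.map_le_iff_le_comap, ← ker_comp, ← hsemiconj]
    exact ker_le_ker_comp _ _
  have hrange : (range (LinearMap.id - f)).map g ≤ range (LinearMap.id - f') := by
    rw [← range_comp, hsemiconj]
    exact range_comp_le_range _ _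
  rw [eq_top_iff, ← range_eq_top.mpr hg, range_eq_map, ← hf, Submodule.map_sup]
  exact sup_le_sup hker hrange

end

theorem invariantsToCoinvariants_bijective_of_surjective {K V : Type*} [Field K]
    [AddCommGroup V] [Module K V] [FiniteDimensional K V] (f : V →ₗ[K] V)
    (hf : Function.Surjective (invariantsToCoinvariants f)) :
    Function.Bijective (invariantsToCoinvariants f) := by
  have hdim : Module.finrank K (LinearMap.ker (LinearMap.id - f)) =
      Module.finrank K (V ⧸ LinearMap.range (LinearMap.id - f)) := by
    have hquot := Submodule.finrank_quotient_add_finrank (LinearMap.range (LinearMap.id - f))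
    have hrank := LinearMap.finrank_range_add_finrank_ker (LinearMap.id - f)
    omega
  exact ⟨(LinearMap.injective_iff_surjective_of_finrank_eq_finrank hdim).mpr hf, hf⟩

/-- If `(V, F)` is 1-semi-simple and `W ⊆ V` is an `F`-invariant subspace,
then the endomorphism `F̄` induced by `F` on the quotient `V ⧸ W` is 1-semi-simple. -/
theorem oneSemisimple_quotient
    (ℓ : ℕ) [Fact ℓ.Prime] (V : Type*) [AddCommGroup V] [Module ℚ_[ℓ] V]
    [FiniteDimensional ℚ_[ℓ] V] (F : V →ₗ[ℚ_[ℓ]] V)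
    (hF : Function.Bijective (invariantsToCoinvariants F))
    (W : Submodule ℚ_[ℓ] V) (hW : W ≤ W.comap F) :
    Function.Bijective (invariantsToCoinvariants (W.mapQ W F hW)) :=
  invariantsToCoinvariants_bijective_of_surjective _ <|
    invariantsToCoinvariants_surjective_of_semiconj W.mkQ_surjective
      (W.mapQ_mkQ W F).symm hF.surjective
end

section
/- Let ℓ be a prime number, let V be a finite-dimensional ℚ_ℓ-vector space, and let F : V → V be a linear endomorphism such that (V, F) is 1-semi-simple. Let K ⊆ V be a linear subspace with F(K) ⊆ K. Then K ∩ (id − F)(V) = (id − F)(K) as subspaces of V; equivalently, the induced map on coinvariants K/im(id − F|_K) → V/im(id − F) is injective. -/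
/-!
Put `G = id − F`. Injectivity of `V^F → V_F` says exactly that `ker G ∩ im G = 0`, so `G` is
injective on the `G`-stable subspace `K ∩ im G`. Being finite-dimensional, `K ∩ im G` is then
mapped onto itself by `G`, which gives `K ∩ im G ⊆ G(K)`; the other inclusion is clear.
-/

theorem injective_invariantsToCoinvariants_iff_s9 {R V : Type*} [CommRing R] [AddCommGroup V]
    [Module R V] (F : V →ₗ[R] V) :
    Function.Injective (invariantsToCoinvariants F) ↔
      Disjoint (LinearMap.ker (LinearMap.id - F)) (LinearMap.range (LinearMap.id - F)) := by
  rw [← LinearMap.ker_eq_bot, invariantsToCoinvariants, LinearMap.ker_comp, Submodule.ker_mkQ,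
    Submodule.disjoint_iff_comap_eq_bot]

namespace Module.End

variable {R M : Type*} [Ring R] [AddCommGroup M] [Module R M]

theorem inf_range_eq_map_of_disjoint_ker_range [IsArtinian R M] {G : Module.End R M}
    (hG : Disjoint (LinearMap.ker G) (LinearMap.range G)) {p : Submodule R M}
    (hp : ∀ x ∈ p, G x ∈ p) :
    p ⊓ LinearMap.range G = p.map G := by
  have hmaps : ∀ x ∈ p ⊓ LinearMap.range G, G x ∈ p ⊓ LinearMap.range G :=
    fun x hx => ⟨hp x hx.1, LinearMap.mem_range_self G x⟩
  have hinj : Function.Injective (G.restrict hmaps) := by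
    refine (injective_iff_map_eq_zero _).mpr fun x hx => Subtype.ext ?_
    exact hG.le_bot ⟨congrArg Subtype.val hx, x.2.2⟩
  refine le_antisymm (fun x hx => ?_) ?_
  · obtain ⟨y, hy⟩ := IsArtinian.surjective_of_injective_endomorphism _ hinj ⟨x, hx⟩
    exact ⟨y, y.2.1, congrArg Subtype.val hy⟩
  · rintro _ ⟨y, hy, rfl⟩
    exact ⟨hp y hy, LinearMap.mem_range_self G y⟩

end Module.End

/-- If `(V, F)` is 1-semi-simple and `K ⊆ V` is an `F`-invariant subspace,
then `K ∩ (id − F)(V) = (id − F)(K)` as subspaces of `V`; equivalently, the induced map on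
coinvariants `K ⧸ im(id − F|_K) → V ⧸ im(id − F)` is injective. -/
theorem inf_range_eq_map_of_oneSemisimple
    (ℓ : ℕ) [Fact ℓ.Prime] (V : Type*) [AddCommGroup V] [Module ℚ_[ℓ] V]
    [FiniteDimensional ℚ_[ℓ] V] (F : V →ₗ[ℚ_[ℓ]] V)
    (hF : Function.Bijective (invariantsToCoinvariants F))
    (K : Submodule ℚ_[ℓ] V) (hK : ∀ x ∈ K, F x ∈ K) :
    K ⊓ LinearMap.range (LinearMap.id - F) =
      Submodule.map (LinearMap.id - F) K :=
  Module.End.inf_range_eq_map_of_disjoint_ker_range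
    ((injective_invariantsToCoinvariants_iff_s9 F).mp hF.injective)
    fun x hx => K.sub_mem hx (hK x hx)
end

section
/- Let ℓ be a prime number, let V be a finite-dimensional ℚ_ℓ-vector space with a linear endomorphism F : V → V such that (V, F) is 1-semi-simple, let W be a ℚ_ℓ-vector space (possibly infinite-dimensional) with a linear endomorphism G : W → W, and let φ : V → W be a linear map with φ ∘ F = G ∘ φ. Then every element ω in the image of φ with G(ω) = ω admits a fixed lift: there exists v ∈ V with F(v) = v and φ(v) = ω. -/
/-!
With `N = id − F`, 1-semi-simplicity says that `ker N` meets `range N` only in `0`. If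
`φ v₀ = ω` with `G ω = ω`, then `N v₀` lies in `ker φ ∩ range N`. On this finite-dimensional
`N`-stable subspace `N` is injective, hence surjective, so `N v₀ = N w` for some `w ∈ ker φ`,
and `v₀ − w` is the fixed lift.
-/

open LinearMap

theorem disjoint_ker_range_of_injective_invariantsToCoinvariants {R V : Type*} [CommRing R]
    [AddCommGroup V] [Module R V] {F : V →ₗ[R] V}
    (hF : Function.Injective (invariantsToCoinvariants F)) :
    Disjoint (ker (LinearMap.id - F)) (range (LinearMap.id - F)) := by
  refine Submodule.disjoint_def.mpr fun x hker hrange ↦ ?_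
  have : invariantsToCoinvariants F ⟨x, hker⟩ = invariantsToCoinvariants F 0 := by
    simpa [invariantsToCoinvariants, Submodule.Quotient.mk_eq_zero] using hrange
  exact congrArg Subtype.val (hF this)

theorem Submodule.inf_range_le_map_of_disjoint_ker_range {K V : Type*} [Field K]
    [AddCommGroup V] [Module K V] [FiniteDimensional K V] {N : V →ₗ[K] V}
    (hN : Disjoint (ker N) (range N)) (P : Submodule K V) (hP : ∀ x ∈ P, N x ∈ P) :
    P ⊓ range N ≤ P.map N := by
  have hstable : ∀ x ∈ P ⊓ range N, N x ∈ P ⊓ range N :=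
    fun x hx ↦ ⟨hP x hx.1, mem_range_self N x⟩
  have hinj : Function.Injective (N.restrict hstable) := by
    refine (injective_iff_map_eq_zero _).mpr fun x hx ↦ Subtype.ext ?_
    exact Submodule.disjoint_def.mp hN x (congrArg Subtype.val hx) x.2.2
  intro x hx
  obtain ⟨y, hy⟩ := injective_iff_surjective.mp hinj ⟨x, hx⟩
  exact ⟨y, y.2.1, congrArg Subtype.val hy⟩

/-- Let `(V, F)` be 1-semi-simple with `V` finite-dimensional over
`ℚ_[ℓ]`, let `W` be a (possibly infinite-dimensional) `ℚ_[ℓ]`-vector space with an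
endomorphism `G`, and let `φ : V → W` be linear with `φ ∘ F = G ∘ φ`. Then every `ω` in
the image of `φ` with `G ω = ω` admits a fixed lift: some `v ∈ V` with `F v = v` and
`φ v = ω`. -/
theorem exists_fixed_lift_of_oneSemisimple
    (ℓ : ℕ) [Fact ℓ.Prime] (V : Type*) [AddCommGroup V] [Module ℚ_[ℓ] V]
    [FiniteDimensional ℚ_[ℓ] V] (F : V →ₗ[ℚ_[ℓ]] V)
    (hF : Function.Bijective (invariantsToCoinvariants F))
    (W : Type*) [AddCommGroup W] [Module ℚ_[ℓ] W]
    (G : W →ₗ[ℚ_[ℓ]] W) (φ : V →ₗ[ℚ_[ℓ]] W) (hφ : φ ∘ₗ F = G ∘ₗ φ)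
    (ω : W) (hω : G ω = ω) (hmem : ∃ v : V, φ v = ω) :
    ∃ v : V, F v = v ∧ φ v = ω := by
  obtain ⟨v₀, rfl⟩ := hmem
  set N : V →ₗ[ℚ_[ℓ]] V := LinearMap.id - F
  have hN (x : V) : N x = x - F x := rfl
  have hcomm (x : V) : φ (F x) = G (φ x) := congr($hφ x)
  have hstable : ∀ x ∈ ker φ, N x ∈ ker φ := by
    intro x hx
    rw [mem_ker] at hx ⊢
    rw [hN, map_sub, hcomm, hx, map_zero, sub_zero]
  have hv₀ : N v₀ ∈ ker φ ⊓ range N :=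
    ⟨mem_ker.mpr (by rw [hN, map_sub, hcomm, hω, sub_self]), mem_range_self N v₀⟩
  obtain ⟨w, hw, hNw⟩ := Submodule.inf_range_le_map_of_disjoint_ker_range
    (disjoint_ker_range_of_injective_invariantsToCoinvariants hF.injective) _ hstable hv₀
  refine ⟨v₀ - w, ?_, by rw [map_sub, mem_ker.mp hw, sub_zero]⟩
  have hfixed : N (v₀ - w) = 0 := by rw [map_sub, hNw, sub_self]
  rwa [hN, sub_eq_zero, eq_comm] at hfixed
end
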